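/- For Vein's oscillator dynamical system x' = v, v' = -h₂(x)v - h₃(x), with h₂(x) = 3(ax+b²)/(bx+a²)³ and h₃(x) = (x³-3abx-a³-b³)/(bx+a²)⁵, assume a ≠ b and b(a+b)+a² ≠ 0. Then (a+b, 0) is an equilibrium point, and the linearization there has trace -δ₁ᵣ and determinant δ₂ᵣ with δ₁ᵣ = -3/(a²+ab+b²)² < 0, δ₂ᵣ = 3/(a²+ab+b²)⁴ > 0, and discriminant Δᵣ = δ₁ᵣ² - 4δ₂ᵣ = -δ₂ᵣ < 0, so the eigenvalues of the Jacobian are (√3/(2(a²+ab+b²)²))(-√3 ± i); in particular (a+b,0) is a stable spiral. -/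

import Mathlib

noncomputable def h2 (a b x : ℝ) : ℝ := 3 * (a * x + b ^ 2) / (b * x + a ^ 2) ^ 3

noncomputable def h3 (a b x : ℝ) : ℝ :=
  (x ^ 3 - 3 * a * b * x - a ^ 3 - b ^ 3) / (b * x + a ^ 2) ^ 5

/-!
The numerator of `h3` is `(x - a - b) (x² + (a + b) x + a² - a b + b²)`, so `a + b` is a simple zero
of `h3` and `h3'(a + b)` is the cofactor divided by the denominator, both evaluated at `a + b`,
where each reduces to a power of `s = a² + a b + b² > 0`. This gives `h2(a + b) = 3 / s²` and
`h3'(a + b) = 3 / s⁴`, and with `r = √3 / (2 s²)` the characteristic polynomial is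
`λ² + 2√3 r λ + 4 r²`, whose roots are `r (-√3 ± i)`.
-/

open Complex

lemma sq_add_mul_add_sq_pos {a b : ℝ} (h : a ≠ 0 ∨ b ≠ 0) : 0 < a ^ 2 + a * b + b ^ 2 := by
  rcases eq_or_ne b 0 with rfl | hb
  · simpa [sq_pos_iff] using h
  · nlinarith [sq_nonneg (2 * a + b), sq_pos_of_ne_zero hb]

lemma HasDerivAt.div_of_eq_zero {𝕜 : Type*} [NontriviallyNormedField 𝕜] {f g : 𝕜 → 𝕜}
    {f' g' x : 𝕜} (hf : HasDerivAt f f' x) (hg : HasDerivAt g g' x) (hfx : f x = 0)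
    (hgx : g x ≠ 0) : HasDerivAt (fun y => f y / g y) (f' / g x) x := by
  refine (hf.fun_div hg hgx).congr_deriv ?_
  rw [hfx]
  field_simp
  ring

lemma root_and_re_of_eq_mul_neg_sqrt_three_pm_I (r : ℝ) {z : ℂ}
    (hz : z = r * (-(√3 : ℂ) + I) ∨ z = r * (-(√3 : ℂ) - I)) :
    z ^ 2 + (2 * √3 * r : ℝ) * z + (4 * r ^ 2 : ℝ) = 0 ∧ z.re = -(√3 * r) := by
  have h3 : ((√3 : ℝ) : ℂ) ^ 2 = 3 := by
    rw [← ofReal_pow, Real.sq_sqrt (by norm_num : (0 : ℝ) ≤ 3)]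
    norm_num
  rcases hz with rfl | rfl <;> refine ⟨?_, by simp [mul_comm]⟩ <;> push_cast <;>
    linear_combination (r : ℂ) ^ 2 * (I_sq - h3)

section Vein

variable (a b : ℝ)

lemma h3_add_eq_zero : h3 a b (a + b) = 0 := by
  rw [h3, show (a + b) ^ 3 - 3 * a * b * (a + b) - a ^ 3 - b ^ 3 = 0 by ring, zero_div]

lemma h2_add : h2 a b (a + b) = 3 / (a ^ 2 + a * b + b ^ 2) ^ 2 := by
  rw [h2, show a * (a + b) + b ^ 2 = a ^ 2 + a * b + b ^ 2 by ring,
    show b * (a + b) + a ^ 2 = a ^ 2 + a * b + b ^ 2 by ring]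
  rcases eq_or_ne (a ^ 2 + a * b + b ^ 2) 0 with hs | hs
  · simp [hs]
  · field_simp

lemma hasDerivAt_h3_add (hs : a ^ 2 + a * b + b ^ 2 ≠ 0) :
    HasDerivAt (h3 a b) (3 / (a ^ 2 + a * b + b ^ 2) ^ 4) (a + b) := by
  have hnum : HasDerivAt (fun x => x ^ 3 - 3 * a * b * x - a ^ 3 - b ^ 3)
      (3 * (a ^ 2 + a * b + b ^ 2)) (a + b) :=
    ((((hasDerivAt_pow 3 (a + b)).fun_sub ((hasDerivAt_id' (a + b)).const_mul (3 * a * b))).sub_const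
      (a ^ 3)).sub_const (b ^ 3)).congr_deriv (by push_cast; ring)
  have hden : HasDerivAt (fun x => (b * x + a ^ 2) ^ 5)
      (5 * (b * (a + b) + a ^ 2) ^ 4 * b) (a + b) := by
    simpa using (((hasDerivAt_id (a + b)).const_mul b).add_const (a ^ 2)).fun_pow 5
  have hden_eq : (b * (a + b) + a ^ 2) ^ 5 = (a ^ 2 + a * b + b ^ 2) ^ 5 := by ring
  refine (hnum.div_of_eq_zero hden (by ring) (hden_eq ▸ pow_ne_zero 5 hs)).congr_deriv ?_
  rw [hden_eq]
  field_simp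

end Vein

theorem vein_oscillator_real_fixed_point_general
    (a b : ℝ) (hab : a ≠ b) :
    let δ1r : ℝ := -3 / (a ^ 2 + a * b + b ^ 2) ^ 2
    let δ2r : ℝ := 3 / (a ^ 2 + a * b + b ^ 2) ^ 4
    let J : Matrix (Fin 2) (Fin 2) ℝ :=
      !![0, 1; -deriv (h3 a b) (a + b), -h2 a b (a + b)]
    -- (a+b, 0) is an equilibrium point
    (h3 a b (a + b) = 0) ∧
    -- trace and determinant of the linearization
    (Matrix.trace J = δ1r) ∧ (Matrix.det J = δ2r) ∧
    (δ1r < 0) ∧ (0 < δ2r) ∧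
    -- discriminant
    (δ1r ^ 2 - 4 * δ2r = -δ2r) ∧ (-δ2r < 0) ∧
    -- eigenvalues of the Jacobian
    (∀ lam : ℂ,
      (lam = (Real.sqrt 3 / (2 * (a ^ 2 + a * b + b ^ 2) ^ 2) : ℝ) * (-(Real.sqrt 3 : ℂ) + Complex.I) ∨
       lam = (Real.sqrt 3 / (2 * (a ^ 2 + a * b + b ^ 2) ^ 2) : ℝ) * (-(Real.sqrt 3 : ℂ) - Complex.I)) →
      lam ^ 2 + (h2 a b (a + b) : ℂ) * lam + ((deriv (h3 a b) (a + b) : ℝ) : ℂ) = 0 ∧ lam.re < 0) := by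
  intro δ1r δ2r J
  have hs : 0 < a ^ 2 + a * b + b ^ 2 :=
    sq_add_mul_add_sq_pos (by by_contra! h; exact hab (h.1.trans h.2.symm))
  have hderiv : deriv (h3 a b) (a + b) = 3 / (a ^ 2 + a * b + b ^ 2) ^ 4 :=
    (hasDerivAt_h3_add a b hs.ne').deriv
  refine ⟨h3_add_eq_zero a b, ?_, ?_, ?_, by positivity, ?_, ?_, fun lam hlam => ?_⟩
  · simp only [J, Matrix.trace_fin_two_of, h2_add, δ1r]
    ring
  · simp only [J, Matrix.det_fin_two_of, hderiv, δ2r]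
    ring
  · exact div_neg_of_neg_of_pos (by norm_num) (by positivity)
  · simp only [δ1r, δ2r]
    field_simp
    ring
  · exact neg_neg_of_pos (by positivity)
  · obtain ⟨hroot, hre⟩ := root_and_re_of_eq_mul_neg_sqrt_three_pm_I _ hlam
    have hh2 : h2 a b (a + b) = 2 * √3 * (√3 / (2 * (a ^ 2 + a * b + b ^ 2) ^ 2)) := by
      rw [h2_add]
      field_simp
      norm_num
    have hderiv' : deriv (h3 a b) (a + b) = 4 * (√3 / (2 * (a ^ 2 + a * b + b ^ 2) ^ 2)) ^ 2 := by
      rw [hderiv]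
      field_simp
      norm_num
    rw [hh2, hderiv']
    exact ⟨hroot, hre ▸ neg_neg_of_pos (by positivity)⟩

theorem vein_oscillator_real_fixed_point
    (a b : ℝ) (hab : a ≠ b) (hden : b * (a + b) + a ^ 2 ≠ 0) :
    let δ1r : ℝ := -3 / (a ^ 2 + a * b + b ^ 2) ^ 2
    let δ2r : ℝ := 3 / (a ^ 2 + a * b + b ^ 2) ^ 4
    let J : Matrix (Fin 2) (Fin 2) ℝ :=
      !![0, 1; -deriv (h3 a b) (a + b), -h2 a b (a + b)]
    -- (a+b, 0) is an equilibrium point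
    (h3 a b (a + b) = 0) ∧
    -- trace and determinant of the linearization
    (Matrix.trace J = δ1r) ∧ (Matrix.det J = δ2r) ∧
    (δ1r < 0) ∧ (0 < δ2r) ∧
    -- discriminant
    (δ1r ^ 2 - 4 * δ2r = -δ2r) ∧ (-δ2r < 0) ∧
    -- eigenvalues of the Jacobian
    (∀ lam : ℂ,
      (lam = (Real.sqrt 3 / (2 * (a ^ 2 + a * b + b ^ 2) ^ 2) : ℝ) * (-(Real.sqrt 3 : ℂ) + Complex.I) ∨
       lam = (Real.sqrt 3 / (2 * (a ^ 2 + a * b + b ^ 2) ^ 2) : ℝ) * (-(Real.sqrt 3 : ℂ) - Complex.I)) →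
      lam ^ 2 + (h2 a b (a + b) : ℂ) * lam + ((deriv (h3 a b) (a + b) : ℝ) : ℂ) = 0 ∧ lam.re < 0) :=
  vein_oscillator_real_fixed_point_general a b hab
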